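/- (Convergence of the inertial PC-algorithm I with bounded-perturbation form, iPC I-2.) Let ν ∈ (0,1), γ ∈ (0,2), and let {α_k} ⊆ [0,1]. Let x^{-1}, x^0 ∈ H and let {x^k}, {y^k}, {β_k} satisfy, for every k ≥ 0, with w^k := x^k + α_k(x^k − x^{k−1}): β_k > 0 with inf_k β_k > 0; y^k = P_C(w^k − β_k F(w^k)); β_k‖F(w^k) − F(y^k)‖ ≤ ν‖w^k − y^k‖; d^k := (w^k − y^k) − β_k(F(w^k) − F(y^k)) ≠ 0; ρ_k := ⟨w^k − y^k, d^k⟩/‖d^k‖²; x^{k+1} = w^k − γ ρ_k d^k. If Σ_{k=0}^∞ α_k‖x^k − x^{k−1}‖ < +∞, then {x^k} converges weakly (i.e., ⟨x^k, u⟩ → ⟨x̂, u⟩ for every u ∈ H) to some point x̂ ∈ SOL(C,F). -/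

import Mathlib

/-!
For every solution `q`, the projection–contraction (PC) step gives
`‖x^{k+1} - q‖² ≤ ‖w^k - q‖² - γ(2 - γ)((1 - ν)/(1 + ν))² ‖w^k - y^k‖²`, while
`‖w^k - x^k‖ = α_k ‖x^k - x^{k-1}‖` is summable. Hence `‖x^k - q‖` converges (quasi-Fejér
monotonicity) and `‖w^k - y^k‖ → 0`. A weak cluster point `z` of `(x^k)` is then one of
`(y^k) ⊆ C`; passing to the limit in the projection inequality gives `⟪F v, v - z⟫ ≥ 0` for all
`v ∈ C`, and Minty's lemma makes `z` a solution. Opial's argument finishes: bounded sequences have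
weak cluster points (Banach–Alaoglu, through the Riesz isomorphism), and two cluster points
`z₁, z₂` among the solutions coincide because `⟪x^k, z₂ - z₁⟫` converges, its limit being both
`⟪z₁, z₂ - z₁⟫` and `⟪z₂, z₂ - z₁⟫`.
-/

open RealInnerProductSpace Filter Topology

theorem exists_tendsto_of_le_add_of_summable {a ε : ℕ → ℝ} (ha : BddBelow (Set.range a))
    (hε : ∀ k, 0 ≤ ε k) (hsum : Summable ε) (hstep : ∀ k, a (k + 1) ≤ a k + ε k) :
    ∃ ℓ, Tendsto a atTop (𝓝 ℓ) := by
  obtain ⟨m, hm⟩ := ha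
  set b : ℕ → ℝ := fun k => a k - ∑ j ∈ Finset.range k, ε j
  have hanti : Antitone b := antitone_nat_of_succ_le fun k => by
    simp only [b, Finset.sum_range_succ]
    linarith [hstep k]
  have hbdd : BddBelow (Set.range b) := ⟨m - ∑' j, ε j, by
    rintro _ ⟨k, rfl⟩
    linarith [hm ⟨k, rfl⟩, hsum.sum_le_tsum (Finset.range k) fun j _ => hε j]⟩
  refine ⟨(⨅ k, b k) + ∑' j, ε j, ?_⟩
  simpa [b] using (tendsto_atTop_ciInf hanti hbdd).add hsum.hasSum.tendsto_sum_nat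

section Fejer

variable {E : Type*} [SeminormedAddCommGroup E]

theorem exists_tendsto_norm_sub_of_le {x w : ℕ → E} {ε : ℕ → ℝ} {q : E} (hsum : Summable ε)
    (hwx : ∀ k, ‖w k - x k‖ ≤ ε k) (hstep : ∀ k, ‖x (k + 1) - q‖ ≤ ‖w k - q‖) :
    ∃ ℓ, Tendsto (fun k => ‖x k - q‖) atTop (𝓝 ℓ) := by
  refine exists_tendsto_of_le_add_of_summable ⟨0, ?_⟩ (fun k => (norm_nonneg _).trans (hwx k))
    hsum fun k => (hstep k).trans ?_
  · rintro _ ⟨k, rfl⟩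
    exact norm_nonneg _
  · calc ‖w k - q‖ ≤ ‖x k - q‖ + ‖w k - x k‖ :=
          (norm_sub_le_norm_sub_add_norm_sub _ _ _).trans_eq (add_comm _ _)
      _ ≤ ‖x k - q‖ + ε k := by gcongr; exact hwx k

theorem tendsto_norm_sub_zero_of_sq_le {x w y : ℕ → E} {p : E} {c ℓ : ℝ} (hc : 0 < c)
    (hℓ : Tendsto (fun k => ‖x k - p‖) atTop (𝓝 ℓ))
    (hwx : Tendsto (fun k => ‖w k - x k‖) atTop (𝓝 0))
    (h : ∀ k, ‖x (k + 1) - p‖ ^ 2 ≤ ‖w k - p‖ ^ 2 - c * ‖w k - y k‖ ^ 2) :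
    Tendsto (fun k => ‖w k - y k‖) atTop (𝓝 0) := by
  have hwp : Tendsto (fun k => ‖w k - p‖) atTop (𝓝 ℓ) := by
    refine tendsto_of_tendsto_of_tendsto_of_le_of_le (by simpa using hℓ.sub hwx)
      (by simpa using hℓ.add hwx) (fun k => ?_) (fun k => ?_)
    · linarith [norm_sub_le_norm_sub_add_norm_sub (x k) (w k) p, norm_sub_rev (x k) (w k)]
    · exact norm_sub_le_norm_sub_add_norm_sub _ _ _ |>.trans_eq (add_comm _ _)
  have hgap : Tendsto (fun k => (‖w k - p‖ ^ 2 - ‖x (k + 1) - p‖ ^ 2) / c) atTop (𝓝 0) := by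
    simpa using ((hwp.pow 2).sub ((hℓ.comp (tendsto_add_atTop_nat 1)).pow 2)).div_const c
  have hsq : Tendsto (fun k => ‖w k - y k‖ ^ 2) atTop (𝓝 0) :=
    squeeze_zero (fun k => by positivity) (fun k => by rw [le_div_iff₀ hc]; linarith [h k]) hgap
  simpa [Real.sqrt_sq (norm_nonneg _)] using hsq.sqrt

end Fejer

section InnerProductSpace

variable {H : Type*} [NormedAddCommGroup H] [InnerProductSpace ℝ H]

def IsWeakClusterPt (x : ℕ → H) (z : H) : Prop :=
  MapClusterPt (toWeakSpace ℝ H z) atTop (toWeakSpace ℝ H ∘ x)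

theorem continuous_inner_toWeakSpace_symm (u : H) :
    Continuous fun v : WeakSpace ℝ H => ⟪(toWeakSpace ℝ H).symm v, u⟫ := by
  have := WeakBilin.eval_continuous (topDualPairing ℝ H).flip (innerSL ℝ u)
  simp_rw [real_inner_comm u]
  exact this

theorem IsWeakClusterPt.exists_ultrafilter {x : ℕ → H} {z : H} (hz : IsWeakClusterPt x z) :
    ∃ U : Ultrafilter ℕ, (U : Filter ℕ) ≤ atTop ∧
      ∀ u, Tendsto (fun k => ⟪x k, u⟫) (U : Filter ℕ) (𝓝 ⟪z, u⟫) := by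
  obtain ⟨U, hU, hxU⟩ := mapClusterPt_iff_ultrafilter.1 hz
  exact ⟨U, hU, fun u => ((continuous_inner_toWeakSpace_symm u).tendsto _).comp hxU⟩

theorem IsWeakClusterPt.inner_le {x : ℕ → H} {z u : H} {a : ℕ → ℝ} {A : ℝ}
    (hz : IsWeakClusterPt x z) (hle : ∀ k, ⟪x k, u⟫ ≤ a k) (ha : Tendsto a atTop (𝓝 A)) :
    ⟪z, u⟫ ≤ A := by
  obtain ⟨U, hU, hxU⟩ := hz.exists_ultrafilter
  exact le_of_tendsto_of_tendsto' (hxU u) (ha.mono_left hU) hle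

theorem IsWeakClusterPt.inner_eq_of_tendsto {x : ℕ → H} {z u : H} {c : ℝ}
    (hz : IsWeakClusterPt x z) (hc : Tendsto (fun k => ⟪x k, u⟫) atTop (𝓝 c)) : ⟪z, u⟫ = c := by
  obtain ⟨U, hU, hxU⟩ := hz.exists_ultrafilter
  exact tendsto_nhds_unique (hxU u) (hc.mono_left hU)

theorem IsWeakClusterPt.of_tendsto_norm_sub {x y : ℕ → H} {z : H} (hz : IsWeakClusterPt x z)
    (hxy : Tendsto (fun k => ‖x k - y k‖) atTop (𝓝 0)) : IsWeakClusterPt y z := by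
  obtain ⟨U, hU, hxU⟩ := mapClusterPt_iff_ultrafilter.1 hz
  have hyx : Tendsto (fun k => toWeakSpace ℝ H (y k - x k)) atTop (𝓝 0) := by
    refine ((toWeakSpaceCLM ℝ H).continuous.tendsto 0).comp ?_
    simpa [tendsto_zero_iff_norm_tendsto_zero, norm_sub_rev] using hxy
  refine mapClusterPt_iff_ultrafilter.2 ⟨U, hU, ?_⟩
  simpa [Function.comp_def] using hxU.add (hyx.mono_left hU)

theorem IsWeakClusterPt.mem_of_isClosed_of_convex {x : ℕ → H} {z : H} {C : Set H}
    (hz : IsWeakClusterPt x z) (hCcl : IsClosed C) (hCcv : Convex ℝ C) (hxC : ∀ k, x k ∈ C) :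
    z ∈ C := by
  have hC : IsClosed (toWeakSpace ℝ H '' C) := by
    rw [← closure_eq_iff_isClosed, ← hCcv.toWeakSpace_closure ℝ, hCcl.closure_eq]
  obtain ⟨c, hc, hcz⟩ :=
    hC.mem_of_mapClusterPt hz (Eventually.of_forall fun k => ⟨x k, hxC k, rfl⟩)
  exact (toWeakSpace ℝ H).injective hcz ▸ hc

theorem isCompact_toWeakSpace_closedBall [CompleteSpace H] (r : ℝ) :
    IsCompact (toWeakSpace ℝ H '' Metric.closedBall 0 r) := by
  let Φ : WeakDual ℝ H → WeakSpace ℝ H := fun ℓ =>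
    toWeakSpace ℝ H ((InnerProductSpace.toDual ℝ H).symm (WeakDual.toStrongDual ℓ))
  have hΦ : Continuous Φ := by
    refine WeakBilin.continuous_of_continuous_eval _ fun φ => ?_
    have := WeakDual.eval_continuous (𝕜 := ℝ) (E := H) ((InnerProductSpace.toDual ℝ H).symm φ)
    convert this using 2 with ℓ
    simp only [Φ]
    change φ ((InnerProductSpace.toDual ℝ H).symm (WeakDual.toStrongDual ℓ))
      = WeakDual.toStrongDual ℓ ((InnerProductSpace.toDual ℝ H).symm φ)
    conv_lhs => rw [← (InnerProductSpace.toDual ℝ H).apply_symm_apply φ]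
    conv_rhs => rw [← (InnerProductSpace.toDual ℝ H).apply_symm_apply (WeakDual.toStrongDual ℓ)]
    simp only [InnerProductSpace.toDual_apply_apply, real_inner_comm]
  convert (WeakDual.isCompact_closedBall (0 : StrongDual ℝ H) r).image hΦ
  ext v
  simp only [Set.mem_image, Metric.mem_closedBall, dist_zero_right, Set.mem_preimage, Φ]
  constructor
  · rintro ⟨x, hx, rfl⟩
    exact ⟨StrongDual.toWeakDual (InnerProductSpace.toDual ℝ H x), by simpa using hx, by simp⟩
  · rintro ⟨ℓ, hℓ, rfl⟩
    exact ⟨_, by simpa using hℓ, rfl⟩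

theorem IsWeakClusterPt.eq_of_tendsto_norm_sub {x : ℕ → H} {z₁ z₂ : H} {ℓ₁ ℓ₂ : ℝ}
    (h₁ : IsWeakClusterPt x z₁) (h₂ : IsWeakClusterPt x z₂)
    (hℓ₁ : Tendsto (fun k => ‖x k - z₁‖) atTop (𝓝 ℓ₁))
    (hℓ₂ : Tendsto (fun k => ‖x k - z₂‖) atTop (𝓝 ℓ₂)) : z₁ = z₂ := by
  have hpolar : ∀ v, ⟪v, z₂ - z₁⟫ = (‖v - z₁‖ ^ 2 - ‖v - z₂‖ ^ 2 - ‖z₁‖ ^ 2 + ‖z₂‖ ^ 2) / 2 := by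
    intro v
    rw [norm_sub_sq_real, norm_sub_sq_real, inner_sub_right]
    ring
  have hc : Tendsto (fun k => ⟪x k, z₂ - z₁⟫) atTop
      (𝓝 ((ℓ₁ ^ 2 - ℓ₂ ^ 2 - ‖z₁‖ ^ 2 + ‖z₂‖ ^ 2) / 2)) := by
    simp_rw [hpolar]
    exact ((((hℓ₁.pow 2).sub (hℓ₂.pow 2)).sub_const _).add_const _).div_const _
  have hsq : ‖z₂ - z₁‖ ^ 2 = 0 := by
    rw [← real_inner_self_eq_norm_sq, inner_sub_left, h₁.inner_eq_of_tendsto hc,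
      h₂.inner_eq_of_tendsto hc, sub_self]
  simpa [sub_eq_zero, eq_comm] using hsq

theorem exists_tendsto_inner_of_forall_tendsto_norm_sub [CompleteSpace H] {x : ℕ → H} {S : Set H}
    (hS : S.Nonempty) (hlim : ∀ q ∈ S, ∃ ℓ, Tendsto (fun k => ‖x k - q‖) atTop (𝓝 ℓ))
    (hclus : ∀ z, IsWeakClusterPt x z → z ∈ S) :
    ∃ z ∈ S, ∀ u, Tendsto (fun k => ⟪x k, u⟫) atTop (𝓝 ⟪z, u⟫) := by
  obtain ⟨q, hq⟩ := hS
  obtain ⟨ℓ, hℓ⟩ := hlim q hq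
  obtain ⟨M, hM⟩ := hℓ.bddAbove_range
  have hK := isCompact_toWeakSpace_closedBall (H := H) (M + ‖q‖)
  have hmem : ∀ k, toWeakSpace ℝ H (x k) ∈ toWeakSpace ℝ H '' Metric.closedBall 0 (M + ‖q‖) :=
    fun k => ⟨x k, by
      simpa using (norm_le_norm_sub_add (x k) q).trans (by gcongr; exact hM ⟨k, rfl⟩), rfl⟩
  have hunique : ∀ z₁ z₂, IsWeakClusterPt x z₁ → IsWeakClusterPt x z₂ → z₁ = z₂ := by
    intro z₁ z₂ h₁ h₂
    obtain ⟨ℓ₁, hℓ₁⟩ := hlim z₁ (hclus z₁ h₁)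
    obtain ⟨ℓ₂, hℓ₂⟩ := hlim z₂ (hclus z₂ h₂)
    exact h₁.eq_of_tendsto_norm_sub h₂ hℓ₁ hℓ₂
  obtain ⟨-, ⟨z, -, rfl⟩, hz⟩ := hK.exists_mapClusterPt (f := atTop) (u := toWeakSpace ℝ H ∘ x)
    (tendsto_principal.2 (Eventually.of_forall hmem))
  have hconv : Tendsto (toWeakSpace ℝ H ∘ x) atTop (𝓝 (toWeakSpace ℝ H z)) := by
    refine hK.tendsto_nhds_of_unique_mapClusterPt (Eventually.of_forall hmem) ?_
    rintro - ⟨z', -, rfl⟩ hz'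
    rw [hunique z' z hz' hz]
  exact ⟨z, hclus z hz, fun u => ((continuous_inner_toWeakSpace_symm u).tendsto _).comp hconv⟩

def viSolutions (C : Set H) (F : H → H) : Set H := {q | q ∈ C ∧ ∀ z ∈ C, 0 ≤ ⟪F q, z - q⟫}

theorem one_sub_mul_norm_sq_le_inner_sub {a b : H} {ν : ℝ} (h : ‖b‖ ≤ ν * ‖a‖) :
    (1 - ν) * ‖a‖ ^ 2 ≤ ⟪a, a - b⟫ := by
  rw [inner_sub_right, real_inner_self_eq_norm_sq]
  nlinarith [real_inner_le_norm a b, mul_le_mul_of_nonneg_left h (norm_nonneg a)]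

theorem sq_mul_norm_sq_le_inner_sq_div {a b : H} {ν : ℝ} (hν : ν < 1) (h : ‖b‖ ≤ ν * ‖a‖) :
    ((1 - ν) / (1 + ν)) ^ 2 * ‖a‖ ^ 2 ≤ ⟪a, a - b⟫ ^ 2 / ‖a - b‖ ^ 2 := by
  rcases (norm_nonneg a).eq_or_lt with ha | ha
  · simp only [← ha, ne_eq, OfNat.ofNat_ne_zero, not_false_eq_true, zero_pow, mul_zero]
    positivity
  have hν0 : 0 ≤ ν := nonneg_of_mul_nonneg_left ((norm_nonneg b).trans h) ha
  have hI := one_sub_mul_norm_sq_le_inner_sub h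
  have hd : ‖a - b‖ ≤ (1 + ν) * ‖a‖ := (norm_sub_le a b).trans (by linarith)
  have hdpos : 0 < ‖a - b‖ := by nlinarith [norm_sub_norm_le a b]
  rw [div_pow, div_mul_eq_mul_div, div_le_div_iff₀ (by positivity) (by positivity)]
  calc (1 - ν) ^ 2 * ‖a‖ ^ 2 * ‖a - b‖ ^ 2 ≤ (1 - ν) ^ 2 * ‖a‖ ^ 2 * ((1 + ν) * ‖a‖) ^ 2 := by
        gcongr
    _ = ((1 - ν) * ‖a‖ ^ 2) ^ 2 * (1 + ν) ^ 2 := by ring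
    _ ≤ ⟪a, a - b⟫ ^ 2 * (1 + ν) ^ 2 := by
        gcongr

theorem norm_sub_smul_sq_le {v d : H} {I γ : ℝ} (hγ : 0 ≤ γ) (hI : 0 ≤ I) (hIv : I ≤ ⟪v, d⟫) :
    ‖v - (γ * (I / ‖d‖ ^ 2)) • d‖ ^ 2 ≤ ‖v‖ ^ 2 - γ * (2 - γ) * (I ^ 2 / ‖d‖ ^ 2) := by
  rcases eq_or_ne d 0 with rfl | hd
  · -- both sides are `‖v‖ ^ 2`, as `I / 0 = 0`
    simp
  have hD : 0 < ‖d‖ ^ 2 := by positivity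
  rw [norm_sub_sq_real, real_inner_smul_right, norm_smul, mul_pow, Real.norm_eq_abs, sq_abs]
  have key : 2 * (γ * (I / ‖d‖ ^ 2)) * I ≤ 2 * (γ * (I / ‖d‖ ^ 2) * ⟪v, d⟫) := by
    have : 0 ≤ γ * (I / ‖d‖ ^ 2) := by positivity
    nlinarith
  have e1 : (γ * (I / ‖d‖ ^ 2)) ^ 2 * ‖d‖ ^ 2 = γ ^ 2 * (I ^ 2 / ‖d‖ ^ 2) := by
    field_simp
  have e2 : 2 * (γ * (I / ‖d‖ ^ 2)) * I = 2 * γ * (I ^ 2 / ‖d‖ ^ 2) := by ring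
  nlinarith

theorem inner_sub_direction_nonneg_of_mem_viSolutions {C : Set H} {F : H → H}
    (hmono : ∀ u v : H, 0 ≤ ⟪F u - F v, u - v⟫) {w y q : H} {β : ℝ} (hβ : 0 ≤ β) (hyC : y ∈ C)
    (hproj : ∀ c ∈ C, ⟪w - β • F w - y, c - y⟫ ≤ 0) (hq : q ∈ viSolutions C F) :
    0 ≤ ⟪y - q, (w - y) - β • (F w - F y)⟫ := by
  have hsplit : (w - y) - β • (F w - F y) = (w - β • F w - y) + β • F y := by
    rw [smul_sub]; abel
  have hFy : 0 ≤ ⟪F y, y - q⟫ := by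
    have := hmono y q
    rw [inner_sub_left] at this
    linarith [hq.2 y hyC]
  have hPq : 0 ≤ ⟪w - β • F w - y, y - q⟫ := by
    rw [← neg_sub q y, inner_neg_right]
    linarith [hproj q hq.1]
  rw [hsplit, real_inner_comm, inner_add_left, real_inner_smul_left]
  exact add_nonneg hPq (mul_nonneg hβ hFy)

theorem norm_sub_sq_le_of_pcStep {C : Set H} {F : H → H}
    (hmono : ∀ u v : H, 0 ≤ ⟪F u - F v, u - v⟫) {w y q d : H} {β ν γ ρ : ℝ} (hν : ν < 1)
    (hγ₀ : 0 ≤ γ) (hγ₂ : γ ≤ 2) (hβ : 0 ≤ β) (hyC : y ∈ C)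
    (hproj : ∀ c ∈ C, ⟪w - β • F w - y, c - y⟫ ≤ 0)
    (hstep : β * ‖F w - F y‖ ≤ ν * ‖w - y‖) (hq : q ∈ viSolutions C F)
    (hd : d = (w - y) - β • (F w - F y)) (hρ : ρ = ⟪w - y, d⟫ / ‖d‖ ^ 2) :
    ‖w - (γ * ρ) • d - q‖ ^ 2
      ≤ ‖w - q‖ ^ 2 - γ * (2 - γ) * ((1 - ν) / (1 + ν)) ^ 2 * ‖w - y‖ ^ 2 := by
  subst hd hρ
  have hb : ‖β • (F w - F y)‖ ≤ ν * ‖w - y‖ := by rwa [norm_smul, Real.norm_of_nonneg hβ]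
  have hI : 0 ≤ ⟪w - y, (w - y) - β • (F w - F y)⟫ :=
    (mul_nonneg (by linarith) (sq_nonneg _) : 0 ≤ (1 - ν) * ‖w - y‖ ^ 2).trans
      (one_sub_mul_norm_sq_le_inner_sub hb)
  have hIq : ⟪w - y, (w - y) - β • (F w - F y)⟫ ≤ ⟪w - q, (w - y) - β • (F w - F y)⟫ := by
    rw [← sub_add_sub_cancel w y q, inner_add_left]
    linarith [inner_sub_direction_nonneg_of_mem_viSolutions hmono hβ hyC hproj hq]
  rw [sub_right_comm]
  refine (norm_sub_smul_sq_le hγ₀ hI hIq).trans ?_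
  have := mul_le_mul_of_nonneg_left (sq_mul_norm_sq_le_inner_sq_div hν hb)
    (mul_nonneg hγ₀ (sub_nonneg.2 hγ₂))
  linarith

theorem mem_viSolutions_of_minty {C : Set H} {F : H → H} (hCcv : Convex ℝ C) (hF : Continuous F)
    {z : H} (hz : z ∈ C) (h : ∀ v ∈ C, 0 ≤ ⟪F v, v - z⟫) : z ∈ viSolutions C F := by
  refine ⟨hz, fun v hv => ?_⟩
  have hseg : ∀ t ∈ Set.Ioo (0 : ℝ) 1, 0 ≤ ⟪F (z + t • (v - z)), v - z⟫ := by
    rintro t ⟨ht₀, ht₁⟩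
    have := h _ (hCcv.add_smul_sub_mem hz hv ⟨ht₀.le, ht₁.le⟩)
    rw [add_sub_cancel_left, real_inner_smul_right] at this
    exact nonneg_of_mul_nonneg_right (by linarith) ht₀
  have hlim : Tendsto (fun t : ℝ => ⟪F (z + t • (v - z)), v - z⟫) (𝓝[>] 0) (𝓝 ⟪F z, v - z⟫) := by
    have hcont : Continuous fun t : ℝ => ⟪F (z + t • (v - z)), v - z⟫ := by fun_prop
    simpa using (hcont.tendsto 0).mono_left nhdsWithin_le_nhds
  exact ge_of_tendsto hlim (eventually_of_mem (Ioo_mem_nhdsGT one_pos) hseg)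

theorem neg_mul_le_mul_inner_of_pcStep {C : Set H} {F : H → H}
    (hmono : ∀ u v : H, 0 ≤ ⟪F u - F v, u - v⟫) {w y v : H} {β ν : ℝ} (hβ : 0 ≤ β)
    (hproj : ∀ c ∈ C, ⟪w - β • F w - y, c - y⟫ ≤ 0)
    (hstep : β * ‖F w - F y‖ ≤ ν * ‖w - y‖) (hv : v ∈ C) :
    -((1 + ν) * (‖w - y‖ * ‖v - y‖)) ≤ β * ⟪F v, v - y⟫ := by
  have hPv := hproj v hv
  rw [sub_right_comm, inner_sub_left, real_inner_smul_left] at hPv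
  have hCS : -(‖w - y‖ * ‖v - y‖) ≤ ⟪w - y, v - y⟫ := neg_le_of_abs_le (abs_real_inner_le_norm _ _)
  have hLip : β * ⟪F w - F y, v - y⟫ ≤ ν * (‖w - y‖ * ‖v - y‖) :=
    calc β * ⟪F w - F y, v - y⟫ ≤ β * (‖F w - F y‖ * ‖v - y‖) :=
          mul_le_mul_of_nonneg_left (real_inner_le_norm _ _) hβ
      _ = β * ‖F w - F y‖ * ‖v - y‖ := by ring
      _ ≤ ν * ‖w - y‖ * ‖v - y‖ := mul_le_mul_of_nonneg_right hstep (norm_nonneg _)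
      _ = ν * (‖w - y‖ * ‖v - y‖) := by ring
  have hmono' : ⟪F y, v - y⟫ ≤ ⟪F v, v - y⟫ := by
    have := hmono v y
    rw [inner_sub_left] at this
    linarith
  rw [inner_sub_left] at hLip
  nlinarith [mul_le_mul_of_nonneg_left hmono' hβ]

theorem mem_viSolutions_of_isWeakClusterPt {C : Set H} {F : H → H} (hCcl : IsClosed C)
    (hCcv : Convex ℝ C) (hmono : ∀ u v : H, 0 ≤ ⟪F u - F v, u - v⟫) (hF : Continuous F)
    {w y : ℕ → H} {β : ℕ → ℝ} {b ν : ℝ} (hb : 0 < b) (hν : 0 ≤ ν) (hβ : ∀ k, b ≤ β k)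
    (hyC : ∀ k, y k ∈ C) (hproj : ∀ k, ∀ c ∈ C, ⟪w k - β k • F (w k) - y k, c - y k⟫ ≤ 0)
    (hstep : ∀ k, β k * ‖F (w k) - F (y k)‖ ≤ ν * ‖w k - y k‖)
    (hwy : Tendsto (fun k => ‖w k - y k‖) atTop (𝓝 0))
    (hybdd : IsBoundedUnder (· ≤ ·) atTop fun k => ‖y k‖) {z : H} (hz : IsWeakClusterPt y z) :
    z ∈ viSolutions C F := by
  refine mem_viSolutions_of_minty hCcv hF (hz.mem_of_isClosed_of_convex hCcl hCcv hyC)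
    fun v hv => ?_
  set r : ℕ → ℝ := fun k => (1 + ν) / b * (‖w k - y k‖ * ‖v - y k‖)
  have hle : ∀ k, ⟪y k, F v⟫ ≤ ⟪v, F v⟫ + r k := by
    intro k
    have hβk := neg_mul_le_mul_inner_of_pcStep hmono (hb.le.trans (hβ k)) (hproj k) (hstep k) hv
    have hK : 0 ≤ (1 + ν) * (‖w k - y k‖ * ‖v - y k‖) := by positivity
    have hbk : -((1 + ν) * (‖w k - y k‖ * ‖v - y k‖)) ≤ b * ⟪F v, v - y k⟫ := by
      rcases le_or_gt 0 ⟪F v, v - y k⟫ with h0 | h0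
      · nlinarith
      · nlinarith [mul_le_mul_of_nonpos_right (hβ k) h0.le]
    have hbr : b * r k = (1 + ν) * (‖w k - y k‖ * ‖v - y k‖) := by
      simp only [r]
      field_simp
    rw [inner_sub_right, real_inner_comm v, real_inner_comm (y k)] at hbk
    refine le_of_mul_le_mul_left ?_ hb
    linarith
  have hr : Tendsto r atTop (𝓝 0) := by
    obtain ⟨M, hM⟩ := hybdd
    have hbdd : IsBoundedUnder (· ≤ ·) atTop (norm ∘ fun k => ‖v - y k‖) :=
      ⟨‖v‖ + M, eventually_map.2 ((eventually_map.1 hM).mono fun k hk => by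
        simpa using (norm_sub_le v (y k)).trans (by linarith))⟩
    simpa [r] using (hwy.zero_mul_isBoundedUnder_le hbdd).const_mul ((1 + ν) / b)
  have := hz.inner_le hle (by simpa using hr.const_add ⟪v, F v⟫)
  rw [inner_sub_right, real_inner_comm z, real_inner_comm v]
  linarith

end InnerProductSpace

theorem stmt_16_general {H : Type*} [NormedAddCommGroup H] [InnerProductSpace ℝ H]
    [CompleteSpace H]
    (C : Set H) (hCcl : IsClosed C) (hCcv : Convex ℝ C)
    (P : H → H) (hPmem : ∀ u : H, P u ∈ C)
    (hPchar : ∀ u : H, ∀ c ∈ C, ⟪u - P u, c - P u⟫ ≤ 0)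
    (F : H → H) (hmono : ∀ u v : H, 0 ≤ ⟪F u - F v, u - v⟫)
    (L : ℝ) (hLip : ∀ u v : H, ‖F u - F v‖ ≤ L * ‖u - v‖)
    (hSOL : ∃ p ∈ C, ∀ z ∈ C, 0 ≤ ⟪F p, z - p⟫)
    (ν γ : ℝ) (hν : ν ∈ Set.Ioo (0 : ℝ) 1) (hγ : γ ∈ Set.Ioo (0 : ℝ) 2)
    (α : ℕ → ℝ) (hα : ∀ k, α k ∈ Set.Icc (0 : ℝ) 1)
    (x xm y w : ℕ → H) (β : ℕ → ℝ) (d : ℕ → H) (ρ : ℕ → ℝ)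
    (hw : ∀ k, w k = x k + α k • (x k - xm k))
    (hβinf : ∃ b > (0 : ℝ), ∀ k, b ≤ β k)
    (hy : ∀ k, y k = P (w k - β k • F (w k)))
    (hstep : ∀ k, β k * ‖F (w k) - F (y k)‖ ≤ ν * ‖w k - y k‖)
    (hd : ∀ k, d k = (w k - y k) - β k • (F (w k) - F (y k)))
    (hρ : ∀ k, ρ k = ⟪w k - y k, d k⟫ / ‖d k‖ ^ 2)
    (hx : ∀ k, x (k + 1) = w k - (γ * ρ k) • d k)
    (hsum : Summable (fun k => α k * ‖x k - xm k‖)) :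
    ∃ xhat, (xhat ∈ C ∧ ∀ z ∈ C, 0 ≤ ⟪F xhat, z - xhat⟫) ∧
      ∀ u : H, Filter.Tendsto (fun k => ⟪x k, u⟫) Filter.atTop (nhds ⟪xhat, u⟫) := by
  obtain ⟨p, hp⟩ : (viSolutions C F).Nonempty := hSOL
  obtain ⟨b, hb, hβb⟩ := hβinf
  have hyC : ∀ k, y k ∈ C := fun k => hy k ▸ hPmem _
  have hproj : ∀ k, ∀ c ∈ C, ⟪w k - β k • F (w k) - y k, c - y k⟫ ≤ 0 := fun k => hy k ▸ hPchar _
  have hwx : ∀ k, ‖w k - x k‖ = α k * ‖x k - xm k‖ := fun k => by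
    rw [hw k, add_sub_cancel_left, norm_smul, Real.norm_of_nonneg (hα k).1]
  have hc : 0 < γ * (2 - γ) * ((1 - ν) / (1 + ν)) ^ 2 :=
    mul_pos (mul_pos hγ.1 (by linarith [hγ.2])) (pow_pos (div_pos (by linarith [hν.2])
      (by linarith [hν.1])) 2)
  have hdesc : ∀ q ∈ viSolutions C F, ∀ k, ‖x (k + 1) - q‖ ^ 2
      ≤ ‖w k - q‖ ^ 2 - γ * (2 - γ) * ((1 - ν) / (1 + ν)) ^ 2 * ‖w k - y k‖ ^ 2 :=
    fun q hq k => hx k ▸ norm_sub_sq_le_of_pcStep hmono hν.2 hγ.1.le hγ.2.le (hb.le.trans (hβb k))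
      (hyC k) (hproj k) (hstep k) hq (hd k) (hρ k)
  have hlim : ∀ q ∈ viSolutions C F, ∃ ℓ, Tendsto (fun k => ‖x k - q‖) atTop (𝓝 ℓ) :=
    fun q hq => exists_tendsto_norm_sub_of_le hsum (fun k => (hwx k).le) fun k =>
      (pow_le_pow_iff_left₀ (norm_nonneg _) (norm_nonneg _) two_ne_zero).1
        ((hdesc q hq k).trans (sub_le_self _ (by positivity)))
  obtain ⟨ℓ, hℓ⟩ := hlim p hp
  have hwx₀ : Tendsto (fun k => ‖w k - x k‖) atTop (𝓝 0) := by
    simpa [hwx] using hsum.tendsto_atTop_zero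
  have hwy := tendsto_norm_sub_zero_of_sq_le hc hℓ hwx₀ (hdesc p hp)
  have hxy : Tendsto (fun k => ‖x k - y k‖) atTop (𝓝 0) :=
    squeeze_zero (fun k => norm_nonneg _) (fun k => norm_sub_rev (x k) (w k) ▸
      norm_sub_le_norm_sub_add_norm_sub (x k) (w k) (y k)) (by simpa using hwx₀.add hwy)
  have hybdd : IsBoundedUnder (· ≤ ·) atTop fun k => ‖y k‖ :=
    ((hℓ.add hxy).add_const ‖p‖).isBoundedUnder_le.mono_le (Eventually.of_forall fun k => by
      linarith [norm_le_norm_sub_add (y k) p, norm_sub_le_norm_sub_add_norm_sub (y k) (x k) p,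
        norm_sub_rev (y k) (x k)])
  have hF : Continuous F :=
    (LipschitzWith.of_dist_le' fun u v => by simpa only [dist_eq_norm] using hLip u v).continuous
  exact exists_tendsto_inner_of_forall_tendsto_norm_sub ⟨p, hp⟩ hlim fun z hz =>
    mem_viSolutions_of_isWeakClusterPt hCcl hCcv hmono hF hb hν.1.le hβb hyC hproj hstep hwy hybdd
      (hz.of_tendsto_norm_sub hxy)

/-- `xm k` plays the role of `x^{k-1}` (with `xm 0` the arbitrary starting point `x^{-1}`). -/
theorem stmt_16 {H : Type*} [NormedAddCommGroup H] [InnerProductSpace ℝ H]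
    [CompleteSpace H]
    (C : Set H) (hCne : C.Nonempty) (hCcl : IsClosed C) (hCcv : Convex ℝ C)
    (P : H → H) (hPmem : ∀ u : H, P u ∈ C)
    (hPchar : ∀ u : H, ∀ c ∈ C, ⟪u - P u, c - P u⟫ ≤ 0)
    (F : H → H) (hmono : ∀ u v : H, 0 ≤ ⟪F u - F v, u - v⟫)
    (L : ℝ) (hL : 0 < L) (hLip : ∀ u v : H, ‖F u - F v‖ ≤ L * ‖u - v‖)
    (hSOL : ∃ p ∈ C, ∀ z ∈ C, 0 ≤ ⟪F p, z - p⟫)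
    (ν γ : ℝ) (hν : ν ∈ Set.Ioo (0 : ℝ) 1) (hγ : γ ∈ Set.Ioo (0 : ℝ) 2)
    (α : ℕ → ℝ) (hα : ∀ k, α k ∈ Set.Icc (0 : ℝ) 1)
    (x xm y w : ℕ → H) (β : ℕ → ℝ) (d : ℕ → H) (ρ : ℕ → ℝ)
    (hxm : ∀ k, xm (k + 1) = x k)
    (hw : ∀ k, w k = x k + α k • (x k - xm k))
    (hβpos : ∀ k, 0 < β k) (hβinf : ∃ b > (0 : ℝ), ∀ k, b ≤ β k)
    (hy : ∀ k, y k = P (w k - β k • F (w k)))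
    (hstep : ∀ k, β k * ‖F (w k) - F (y k)‖ ≤ ν * ‖w k - y k‖)
    (hd : ∀ k, d k = (w k - y k) - β k • (F (w k) - F (y k)))
    (hdne : ∀ k, d k ≠ 0)
    (hρ : ∀ k, ρ k = ⟪w k - y k, d k⟫ / ‖d k‖ ^ 2)
    (hx : ∀ k, x (k + 1) = w k - (γ * ρ k) • d k)
    (hsum : Summable (fun k => α k * ‖x k - xm k‖)) :
    ∃ xhat, (xhat ∈ C ∧ ∀ z ∈ C, 0 ≤ ⟪F xhat, z - xhat⟫) ∧
      ∀ u : H, Filter.Tendsto (fun k => ⟪x k, u⟫) Filter.atTop (nhds ⟪xhat, u⟫) :=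
  stmt_16_general C hCcl hCcv P hPmem hPchar F hmono L hLip hSOL ν γ hν hγ α hα x xm y w β d ρ hw
    hβinf hy hstep hd hρ hx hsum
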